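/- Let n ≥ 1 and let M^{n+1} = ℝ × ℝⁿ be the Minkowski Jordan algebra with product (x,v) · (y,w) = (xy + ⟨v,w⟩, xw + yv). Let α be a bijective ℝ-linear map on M^{n+1} with α(z · w) = α(z) · α(w) for all z, w. Then: (i) α(1,0) = (1,0); (ii) α maps the subspace W := {0} × ℝⁿ onto itself; (iii) the restriction of α to W is a linear isometry, i.e. ‖α(0,v)‖ = ‖(0,v)‖ for all v ∈ ℝⁿ. Conversely, for every orthogonal linear map g of ℝⁿ, the map (x,v) ↦ (x, g(v)) is a bijective ℝ-linear multiplicative map of M^{n+1}; consequently, restriction to W defines a group isomorphism from the automorphism group of M^{n+1} onto the orthogonal group O_n(ℝ). -/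

import Mathlib

open RealInnerProductSpace

/-- The product of the Minkowski (spin factor) Jordan algebra `M^{n+1} = ℝ × ℝⁿ`:
`(x,v) · (y,w) = (xy + ⟨v,w⟩, xw + yv)`. -/
noncomputable def mprod {n : ℕ} (z w : ℝ × EuclideanSpace ℝ (Fin n)) :
    ℝ × EuclideanSpace ℝ (Fin n) :=
  (z.1 * w.1 + ⟪z.2, w.2⟫, z.1 • w.2 + w.1 • z.2)

/-! An automorphism `α` fixes the unit `(1,0)`, hence every scalar `(c,0)`. Since
`(0,v)² = ‖v‖²·(1,0)`, the image `(a,w) = α(0,v)` satisfies `(a² + ‖w‖², 2a·w) = (‖v‖², 0)`.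
If `a ≠ 0` then `w = 0`, so `α(0,v) = α(a,0)`, contradicting injectivity; hence `a = 0` and
`‖w‖ = ‖v‖`. Thus `α` restricts to an isometry of the finite-dimensional space `ℝⁿ`, which is
then automatically onto, and `α` is determined by this restriction because `ℝ × ℝⁿ` is spanned
by `(1,0)` and `{0} × ℝⁿ`. -/

namespace Minkowski

variable {n : ℕ}

lemma mprod_one_left (z : ℝ × EuclideanSpace ℝ (Fin n)) : mprod (1, 0) z = z := by
  simp [mprod]

lemma mprod_one_right (z : ℝ × EuclideanSpace ℝ (Fin n)) : mprod z (1, 0) = z := by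
  simp [mprod]

lemma mprod_self (a : ℝ) (w : EuclideanSpace ℝ (Fin n)) :
    mprod (a, w) (a, w) = (a ^ 2 + ‖w‖ ^ 2, (2 * a) • w) := by
  simp only [mprod, real_inner_self_eq_norm_sq, two_mul, add_smul, sq]

lemma mprod_inr_self (v : EuclideanSpace ℝ (Fin n)) : mprod (0, v) (0, v) = (‖v‖ ^ 2, 0) := by
  simpa using mprod_self 0 v

lemma map_one_of_surjective {f : ℝ × EuclideanSpace ℝ (Fin n) → ℝ × EuclideanSpace ℝ (Fin n)}
    (hf : Function.Surjective f)
    (hmul : ∀ z w, f (mprod z w) = mprod (f z) (f w)) : f (1, 0) = (1, 0) := by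
  obtain ⟨u, hu⟩ := hf (1, 0)
  calc f (1, 0) = mprod (f (1, 0)) (1, 0) := (mprod_one_right _).symm
    _ = mprod (f (1, 0)) (f u) := by rw [hu]
    _ = (1, 0) := by rw [← hmul, mprod_one_left, hu]

section
variable (β : (ℝ × EuclideanSpace ℝ (Fin n)) ≃ₗ[ℝ] (ℝ × EuclideanSpace ℝ (Fin n)))
  (hβ : ∀ z w, β (mprod z w) = mprod (β z) (β w))
include hβ

lemma map_scalar (c : ℝ) : β (c, 0) = (c, 0) := by
  have hc : ((c, 0) : ℝ × EuclideanSpace ℝ (Fin n)) = c • (1, 0) := by simp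
  rw [hc, map_smul, map_one_of_surjective β.surjective hβ]

lemma mprod_map_inr_self (v : EuclideanSpace ℝ (Fin n)) :
    mprod (β (0, v)) (β (0, v)) = (‖v‖ ^ 2, 0) := by
  rw [← hβ, mprod_inr_self, map_scalar β hβ]

lemma fst_map_inr (v : EuclideanSpace ℝ (Fin n)) : (β (0, v)).1 = 0 := by
  rcases hz : β (0, v) with ⟨a, w⟩
  have hsq := mprod_map_inr_self β hβ v
  rw [hz, mprod_self, Prod.mk.injEq] at hsq
  by_contra ha
  have hw : w = 0 := (smul_eq_zero.mp hsq.2).resolve_left (by positivity)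
  have : ((0, v) : ℝ × EuclideanSpace ℝ (Fin n)) = (a, 0) :=
    β.injective (by rw [hz, hw, map_scalar β hβ])
  exact ha (congrArg Prod.fst this).symm

lemma norm_snd_map_inr (v : EuclideanSpace ℝ (Fin n)) : ‖(β (0, v)).2‖ = ‖v‖ := by
  have hsq := mprod_map_inr_self β hβ v
  rw [← Prod.mk.eta (p := β (0, v)), fst_map_inr β hβ, mprod_self, Prod.mk.injEq] at hsq
  exact (pow_left_inj₀ (norm_nonneg _) (norm_nonneg _) two_ne_zero).mp (by linarith [hsq.1])

noncomputable def restrictInr : EuclideanSpace ℝ (Fin n) ≃ₗᵢ[ℝ] EuclideanSpace ℝ (Fin n) :=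
  LinearIsometry.toLinearIsometryEquiv
    { toLinearMap := LinearMap.snd ℝ ℝ _ ∘ₗ β.toLinearMap ∘ₗ LinearMap.inr ℝ ℝ _
      norm_map' := norm_snd_map_inr β hβ } rfl

lemma map_inr_eq (v : EuclideanSpace ℝ (Fin n)) : β (0, v) = (0, restrictInr β hβ v) :=
  Prod.ext (fst_map_inr β hβ v) rfl

lemma image_inr_eq : β '' {p | p.1 = 0} = {p | p.1 = 0} := by
  ext ⟨x, v⟩
  simp only [Set.mem_image, Set.mem_ofPred_eq]
  constructor
  · rintro ⟨⟨_, u⟩, rfl, h⟩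
    rw [map_inr_eq β hβ] at h
    exact (congrArg Prod.fst h).symm
  · rintro rfl
    refine ⟨(0, (restrictInr β hβ).symm v), rfl, ?_⟩
    rw [map_inr_eq β hβ, LinearIsometryEquiv.apply_symm_apply]

end

lemma mprod_prodCongr (f : EuclideanSpace ℝ (Fin n) ≃ₗᵢ[ℝ] EuclideanSpace ℝ (Fin n))
    (z w : ℝ × EuclideanSpace ℝ (Fin n)) :
    (LinearEquiv.refl ℝ ℝ).prodCongr f.toLinearEquiv (mprod z w) =
      mprod ((LinearEquiv.refl ℝ ℝ).prodCongr f.toLinearEquiv z)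
        ((LinearEquiv.refl ℝ ℝ).prodCongr f.toLinearEquiv w) := by
  simp only [mprod, LinearEquiv.prodCongr_apply, LinearEquiv.refl_apply,
    LinearIsometryEquiv.coe_toLinearEquiv, map_add, map_smul, f.inner_map_map]

lemma linearEquiv_ext_of_map_one_of_map_inr
    {β γ : (ℝ × EuclideanSpace ℝ (Fin n)) ≃ₗ[ℝ] (ℝ × EuclideanSpace ℝ (Fin n))}
    (h₁ : β (1, 0) = γ (1, 0)) (hinr : ∀ v : EuclideanSpace ℝ (Fin n), β (0, v) = γ (0, v)) :
    β = γ :=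
  LinearEquiv.toLinearMap_injective <|
    LinearMap.prod_ext (LinearMap.ext_ring h₁) (LinearMap.ext hinr)

end Minkowski

open Minkowski

theorem minkowski_automorphisms_general (n : ℕ)
    (α : (ℝ × EuclideanSpace ℝ (Fin n)) ≃ₗ[ℝ] (ℝ × EuclideanSpace ℝ (Fin n)))
    (hα : ∀ z w, α (mprod z w) = mprod (α z) (α w)) :
    α ((1 : ℝ), (0 : EuclideanSpace ℝ (Fin n))) = (1, 0) ∧
    (α '' {p : ℝ × EuclideanSpace ℝ (Fin n) | p.1 = 0}
      = {p : ℝ × EuclideanSpace ℝ (Fin n) | p.1 = 0}) ∧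
    (∀ v : EuclideanSpace ℝ (Fin n), ‖(α ((0 : ℝ), v)).2‖ = ‖v‖) ∧
    (∀ f : EuclideanSpace ℝ (Fin n) ≃ₗᵢ[ℝ] EuclideanSpace ℝ (Fin n),
      ∃ β : (ℝ × EuclideanSpace ℝ (Fin n)) ≃ₗ[ℝ] (ℝ × EuclideanSpace ℝ (Fin n)),
        (∀ p : ℝ × EuclideanSpace ℝ (Fin n), β p = (p.1, f p.2)) ∧
        ∀ z w, β (mprod z w) = mprod (β z) (β w)) ∧
    (∃! f : EuclideanSpace ℝ (Fin n) ≃ₗᵢ[ℝ] EuclideanSpace ℝ (Fin n),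
      ∀ v : EuclideanSpace ℝ (Fin n), α ((0 : ℝ), v) = (0, f v)) ∧
    (∀ β : (ℝ × EuclideanSpace ℝ (Fin n)) ≃ₗ[ℝ] (ℝ × EuclideanSpace ℝ (Fin n)),
      (∀ z w, β (mprod z w) = mprod (β z) (β w)) →
      (∀ v : EuclideanSpace ℝ (Fin n), β ((0 : ℝ), v) = α ((0 : ℝ), v)) → β = α) := by
  refine ⟨map_one_of_surjective α.surjective hα, image_inr_eq α hα, norm_snd_map_inr α hα,
    fun f => ⟨_, fun _ => rfl, mprod_prodCongr f⟩,
    ⟨restrictInr α hα, map_inr_eq α hα, fun g hg => ?_⟩, fun β hβ hinr => ?_⟩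
  · refine LinearIsometryEquiv.ext fun v => ?_
    simpa [map_inr_eq α hα] using (hg v).symm
  · refine linearEquiv_ext_of_map_one_of_map_inr ?_ hinr
    rw [map_one_of_surjective β.surjective hβ, map_one_of_surjective α.surjective hα]

/-- Example 2.28: every automorphism `α` of `M^{n+1}` fixes the unit `(1,0)`, maps the
subspace `W = {0} × ℝⁿ` onto itself and restricts to a linear isometry of `W`;
conversely every orthogonal map of `ℝⁿ` extends to an automorphism.  Consequently,
restriction to `W` is a bijection from the automorphism group of `M^{n+1}` onto the
orthogonal group `O_n(ℝ)`. -/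
theorem minkowski_automorphisms (n : ℕ) (hn : 1 ≤ n)
    (α : (ℝ × EuclideanSpace ℝ (Fin n)) ≃ₗ[ℝ] (ℝ × EuclideanSpace ℝ (Fin n)))
    (hα : ∀ z w, α (mprod z w) = mprod (α z) (α w)) :
    α ((1 : ℝ), (0 : EuclideanSpace ℝ (Fin n))) = (1, 0) ∧
    (α '' {p : ℝ × EuclideanSpace ℝ (Fin n) | p.1 = 0}
      = {p : ℝ × EuclideanSpace ℝ (Fin n) | p.1 = 0}) ∧
    (∀ v : EuclideanSpace ℝ (Fin n), ‖(α ((0 : ℝ), v)).2‖ = ‖v‖) ∧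
    (∀ f : EuclideanSpace ℝ (Fin n) ≃ₗᵢ[ℝ] EuclideanSpace ℝ (Fin n),
      ∃ β : (ℝ × EuclideanSpace ℝ (Fin n)) ≃ₗ[ℝ] (ℝ × EuclideanSpace ℝ (Fin n)),
        (∀ p : ℝ × EuclideanSpace ℝ (Fin n), β p = (p.1, f p.2)) ∧
        ∀ z w, β (mprod z w) = mprod (β z) (β w)) ∧
    (∃! f : EuclideanSpace ℝ (Fin n) ≃ₗᵢ[ℝ] EuclideanSpace ℝ (Fin n),
      ∀ v : EuclideanSpace ℝ (Fin n), α ((0 : ℝ), v) = (0, f v)) ∧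
    (∀ β : (ℝ × EuclideanSpace ℝ (Fin n)) ≃ₗ[ℝ] (ℝ × EuclideanSpace ℝ (Fin n)),
      (∀ z w, β (mprod z w) = mprod (β z) (β w)) →
      (∀ v : EuclideanSpace ℝ (Fin n), β ((0 : ℝ), v) = α ((0 : ℝ), v)) → β = α) :=
  minkowski_automorphisms_general n α hα
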